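/- arXiv:2507.05034 — 4 statements merged into one kernel-verified Lean document; each statement's English description precedes it below -/
import Mathlib

section
/- For every ν ∈ ℝ^n with ν ≠ 0, the Fourier multiplier m^{δ,β}(ν) = c^{δ,β} ∫_{B_δ(0)} (cos(ν·z) - 1)/‖z‖^β dz is strictly negative, and m^{δ,β}(0) = 0. -/
open MeasureTheory Metric Real
open scoped RealInnerProductSpace

/-!
Since `1 - cos ⟪ν, z⟫ ≤ ‖ν‖² ‖z‖² / 2`, the integrand `(1 - cos ⟪ν, z⟫) / ‖z‖ ^ β` is dominated
by a multiple of `‖z‖ ^ (2 - β)`, which is integrable near the origin because `β - 2 < n`.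
It is nonnegative, and positive on the nonempty open set of `z ∈ B_δ(0)` with
`cos ⟪ν, z⟫ ≠ 1`, so its integral over the ball is positive.
-/

section

variable {E : Type*} [NormedAddCommGroup E] [InnerProductSpace ℝ E]

lemma one_sub_cos_inner_le (ν z : E) : 1 - cos ⟪ν, z⟫ ≤ ‖ν‖ ^ 2 / 2 * ‖z‖ ^ 2 := by
  have hsq : ⟪ν, z⟫ ^ 2 ≤ (‖ν‖ * ‖z‖) ^ 2 :=
    sq_le_sq' (neg_le_of_abs_le (abs_real_inner_le_norm ν z)) (real_inner_le_norm ν z)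
  nlinarith [one_sub_sq_div_two_le_cos (x := ⟪ν, z⟫)]

lemma one_sub_cos_inner_div_rpow_nonneg (ν z : E) (β : ℝ) :
    0 ≤ (1 - cos ⟪ν, z⟫) / ‖z‖ ^ β :=
  div_nonneg (sub_nonneg.2 (cos_le_one _)) (rpow_nonneg (norm_nonneg _) _)

lemma one_sub_cos_inner_div_rpow_pos {ν z : E} (hz : cos ⟪ν, z⟫ ≠ 1) (β : ℝ) :
    0 < (1 - cos ⟪ν, z⟫) / ‖z‖ ^ β := by
  have hz₀ : z ≠ 0 := by rintro rfl; simp at hz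
  exact div_pos (sub_pos.2 ((cos_le_one _).lt_of_ne hz)) (rpow_pos_of_pos (norm_pos_iff.2 hz₀) _)

lemma exists_mem_ball_cos_inner_ne_one {ν : E} (hν : ν ≠ 0) {r : ℝ} (hr : 0 < r) :
    ∃ z ∈ ball 0 r, cos ⟪ν, z⟫ ≠ 1 := by
  have hν' : 0 < ‖ν‖ := norm_pos_iff.2 hν
  -- `z = (s / ‖ν‖²) • ν` has `⟪ν, z⟫ = s ∈ (0, π]` and `‖z‖ = s / ‖ν‖ ≤ r / 2`.
  set s := min π (r * ‖ν‖ / 2)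
  have hs : 0 < s := lt_min pi_pos (by positivity)
  refine ⟨(s / ‖ν‖ ^ 2) • ν, ?_, ?_⟩
  · rw [mem_ball_zero_iff, norm_smul, norm_div, norm_pow, norm_norm, Real.norm_of_nonneg hs.le]
    calc s / ‖ν‖ ^ 2 * ‖ν‖ = s / ‖ν‖ := by field_simp
      _ ≤ r * ‖ν‖ / 2 / ‖ν‖ := by gcongr; exact min_le_right _ _
      _ < r := by field_simp; linarith
  · rw [real_inner_smul_right, real_inner_self_eq_norm_sq, div_mul_cancel₀ _ (by positivity),
      Ne, cos_eq_one_iff_of_lt_of_lt (by linarith [pi_pos])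
        (by linarith [min_le_left π (r * ‖ν‖ / 2), pi_pos])]
    exact hs.ne'

variable [FiniteDimensional ℝ E] [MeasurableSpace E] [BorelSpace E]
  {μ : Measure E} [μ.IsAddHaarMeasure]

open Module

lemma integrableOn_one_sub_cos_inner_div_rpow_ball (hd : 1 ≤ finrank ℝ E) (ν : E) {β : ℝ}
    (hβ : β < finrank ℝ E + 2) (r : ℝ) :
    IntegrableOn (fun z ↦ (1 - cos ⟪ν, z⟫) / ‖z‖ ^ β) (ball 0 r) μ := by
  refine integrableOn_ball_of_norm_le_rpow (C := ‖ν‖ ^ 2 / 2) (α := β - 2) hd (by linarith)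
    (ae_of_all _ fun z ↦ ?_)
    (by fun_prop : Measurable _).aestronglyMeasurable
  rw [Real.norm_of_nonneg (one_sub_cos_inner_div_rpow_nonneg ν z β)]
  rcases eq_or_ne z 0 with rfl | hz
  · simp only [inner_zero_right, cos_zero, sub_self, zero_div]
    positivity
  have hz' : 0 < ‖z‖ := norm_pos_iff.2 hz
  calc (1 - cos ⟪ν, z⟫) / ‖z‖ ^ β ≤ ‖ν‖ ^ 2 / 2 * ‖z‖ ^ 2 / ‖z‖ ^ β := by
        gcongr; exact one_sub_cos_inner_le ν z
    _ = ‖ν‖ ^ 2 / 2 * ‖z‖ ^ (-(β - 2)) := by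
        rw [neg_sub, rpow_sub hz', rpow_two, mul_div_assoc]

theorem setIntegral_one_sub_cos_inner_div_rpow_pos {ν : E} (hν : ν ≠ 0) {r : ℝ} (hr : 0 < r)
    {β : ℝ} (hβ : β < finrank ℝ E + 2) :
    0 < ∫ z in ball 0 r, (1 - cos ⟪ν, z⟫) / ‖z‖ ^ β ∂μ := by
  have : Nontrivial E := ⟨⟨ν, 0, hν⟩⟩
  rw [setIntegral_pos_iff_support_of_nonneg_ae
    (ae_of_all _ fun z ↦ one_sub_cos_inner_div_rpow_nonneg ν z β)
    (integrableOn_one_sub_cos_inner_div_rpow_ball finrank_pos ν hβ r)]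
  obtain ⟨z₀, hz₀, hcos⟩ := exists_mem_ball_cos_inner_ne_one hν hr
  have hU : IsOpen {z : E | cos ⟪ν, z⟫ ≠ 1} := isOpen_ne_fun (by fun_prop) continuous_const
  refine ((hU.inter isOpen_ball).measure_pos μ ⟨z₀, hcos, hz₀⟩).trans_le (measure_mono ?_)
  rintro z ⟨hz, hz_ball⟩
  exact ⟨(one_sub_cos_inner_div_rpow_pos hz β).ne', hz_ball⟩

end

theorem multiplier_neg_of_ne_zero_general (n : ℕ) (δ β c : ℝ)
    (hδ : 0 < δ) (hβ : β < n + 2) (hc : 0 < c) :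
    (∀ ν : EuclideanSpace ℝ (Fin n), ν ≠ 0 →
      c * (∫ z in ball (0 : EuclideanSpace ℝ (Fin n)) δ,
        (Real.cos ⟪ν, z⟫ - 1) / ‖z‖ ^ β) < 0) ∧
    c * (∫ z in ball (0 : EuclideanSpace ℝ (Fin n)) δ,
        (Real.cos ⟪(0 : EuclideanSpace ℝ (Fin n)), z⟫ - 1) / ‖z‖ ^ β) = 0 := by
  refine ⟨fun ν hν ↦ mul_neg_of_pos_of_neg hc ?_, by simp⟩
  have hpos := setIntegral_one_sub_cos_inner_div_rpow_pos (μ := volume) hν hδ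
    (β := β) (by rwa [finrank_euclideanSpace_fin])
  simp only [← neg_sub (1 : ℝ), neg_div, integral_neg]
  exact neg_neg_of_pos hpos

/-- The Fourier multiplier `m^{δ,β}(ν) = c^{δ,β} ∫_{B_δ(0)} (cos(ν·z)-1)/‖z‖^β dz`
is strictly negative for every `ν ≠ 0`, and vanishes at `ν = 0`. -/
theorem multiplier_neg_of_ne_zero (n : ℕ) (hn : 1 ≤ n) (δ β c : ℝ)
    (hδ : 0 < δ) (hβ : β < n + 2) (hc : 0 < c) :
    (∀ ν : EuclideanSpace ℝ (Fin n), ν ≠ 0 →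
      c * (∫ z in ball (0 : EuclideanSpace ℝ (Fin n)) δ,
        (Real.cos ⟪ν, z⟫ - 1) / ‖z‖ ^ β) < 0) ∧
    c * (∫ z in ball (0 : EuclideanSpace ℝ (Fin n)) δ,
        (Real.cos ⟪(0 : EuclideanSpace ℝ (Fin n)), z⟫ - 1) / ‖z‖ ^ β) = 0 :=
  multiplier_neg_of_ne_zero_general n δ β c hδ hβ hc
end

section
/- For periodic data with n < β < n+2, if f ∈ H^s(Tⁿ) with s ≥ 0 has zero mean, then the zero-mean solution u of L^{δ,β}u = f on Tⁿ belongs to H^{s+β−n}(Tⁿ); i.e., the solution gains β − n derivatives. -/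
open MeasureTheory Metric Real
open scoped RealInnerProductSpace

/-- The lattice frequency `k ∈ ℤⁿ` viewed as a vector of `ℝⁿ`. -/
def latticeVec (n : ℕ) (k : Fin n → ℤ) : EuclideanSpace ℝ (Fin n) :=
  WithLp.toLp 2 (fun i => (k i : ℝ))

/-- The Fourier multiplier `m^{δ,β}(k)` of the nonlocal Laplacian at lattice
frequency `k`. -/
noncomputable def nonlocalMultiplier (n : ℕ) (δ β c : ℝ) (k : Fin n → ℤ) : ℝ :=
  c * ∫ z in ball (0 : EuclideanSpace ℝ (Fin n)) δ,
    (Real.cos ⟪latticeVec n k, z⟫ - 1) / ‖z‖ ^ β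

/-!
Write `m^{δ,β}(k) = -c · S_δ(k)` with `S_r(K) = ∫_{|z|<r} (1 - cos ⟪K, z⟫) / |z|^β dz`, which is
finite because `1 - cos t ≤ t²/2` and `β < n + 2`. The substitution `z ↦ z / |K|` gives
`S_δ(K) = |K|^{β-n} S_{δ|K|}(K/|K|) ≥ |K|^{β-n} S_δ(K/|K|)` when `|K| ≥ 1`, and `S_δ` is invariant
under rotations, hence constant and positive on the unit sphere. So `|m(k)| ≳ |k|^{β-n}` for
`k ≠ 0`, and `û = f̂ / m` carries the extra weight `(1 + |k|²)^{β-n} ≲ |k|^{2(β-n)}`.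
-/

open scoped Pointwise

variable {E : Type*} [NormedAddCommGroup E] [InnerProductSpace ℝ E]

lemma one_sub_cos_inner_div_nonneg (β : ℝ) (K z : E) :
    0 ≤ (1 - Real.cos ⟪K, z⟫) / ‖z‖ ^ β :=
  div_nonneg (sub_nonneg.mpr (Real.cos_le_one _)) (by positivity)

lemma one_sub_cos_inner_div_le (β : ℝ) (K z : E) :
    (1 - Real.cos ⟪K, z⟫) / ‖z‖ ^ β ≤ ‖K‖ ^ 2 / 2 * ‖z‖ ^ (-(β - 2)) := by
  rcases eq_or_ne z 0 with rfl | hz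
  · simp only [inner_zero_right, Real.cos_zero, sub_self, zero_div]
    positivity
  have hz : 0 < ‖z‖ := norm_pos_iff.mpr hz
  have hcos : 1 - Real.cos ⟪K, z⟫ ≤ ‖K‖ ^ 2 / 2 * ‖z‖ ^ 2 := by
    have hquad := Real.one_sub_sq_div_two_le_cos (x := ⟪K, z⟫)
    have hCS := abs_real_inner_le_norm K z
    nlinarith [sq_abs ⟪K, z⟫, abs_nonneg ⟪K, z⟫]
  calc (1 - Real.cos ⟪K, z⟫) / ‖z‖ ^ β ≤ ‖K‖ ^ 2 / 2 * ‖z‖ ^ 2 / ‖z‖ ^ β := by gcongr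
    _ = _ := by rw [neg_sub, Real.rpow_sub hz, Real.rpow_two]; ring

variable [FiniteDimensional ℝ E] [MeasurableSpace E] [BorelSpace E]

noncomputable def nonlocalSymbol (β r : ℝ) (K : E) : ℝ :=
  ∫ z in ball (0 : E) r, (1 - Real.cos ⟪K, z⟫) / ‖z‖ ^ β

lemma nonlocalMultiplier_eq (n : ℕ) (δ β c : ℝ) (k : Fin n → ℤ) :
    nonlocalMultiplier n δ β c k = -(c * nonlocalSymbol β δ (latticeVec n k)) := by
  rw [nonlocalMultiplier, nonlocalSymbol, ← mul_neg, ← integral_neg]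
  congr 2 with z
  ring

lemma integrableOn_one_sub_cos_inner_div [Nontrivial E] {β : ℝ}
    (hβ : β < Module.finrank ℝ E + 2) (K : E) (r : ℝ) :
    IntegrableOn (fun z : E => (1 - Real.cos ⟪K, z⟫) / ‖z‖ ^ β) (ball 0 r) := by
  refine integrableOn_ball_of_norm_le_rpow (α := β - 2) (C := ‖K‖ ^ 2 / 2) Module.finrank_pos
    (by linarith) (ae_of_all _ fun z => ?_) ?_
  · rw [Real.norm_of_nonneg (one_sub_cos_inner_div_nonneg β K z)]
    exact one_sub_cos_inner_div_le β K z
  · exact (by fun_prop : Measurable _).aestronglyMeasurable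

lemma nonlocalSymbol_nonneg (β r : ℝ) (K : E) : 0 ≤ nonlocalSymbol β r K :=
  setIntegral_nonneg measurableSet_ball fun z _ => one_sub_cos_inner_div_nonneg β K z

lemma nonlocalSymbol_mono [Nontrivial E] {β : ℝ} (hβ : β < Module.finrank ℝ E + 2) (K : E)
    {r r' : ℝ} (hr : r ≤ r') : nonlocalSymbol β r K ≤ nonlocalSymbol β r' K :=
  setIntegral_mono_set (integrableOn_one_sub_cos_inner_div hβ K r')
    (ae_of_all _ fun z => one_sub_cos_inner_div_nonneg β K z)
    (ball_subset_ball hr).eventuallyLE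

lemma nonlocalSymbol_smul (β r : ℝ) (K : E) {t : ℝ} (ht : 0 < t) :
    nonlocalSymbol β r (t • K) = t ^ (β - Module.finrank ℝ E) * nonlocalSymbol β (t * r) K := by
  have hball : t • ball (0 : E) r = ball 0 (t * r) := by
    rw [_root_.smul_ball ht.ne', smul_zero, Real.norm_of_nonneg ht.le]
  have hscale := Measure.setIntegral_comp_smul_of_pos volume
    (fun z : E => (1 - Real.cos ⟪K, z⟫) / ‖z‖ ^ β) (ball 0 r) ht
  have hpt : ∀ z : E, (1 - Real.cos ⟪K, t • z⟫) / ‖t • z‖ ^ β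
      = t ^ (-β) * ((1 - Real.cos ⟪t • K, z⟫) / ‖z‖ ^ β) := by
    intro z
    rw [inner_smul_right, ← real_inner_smul_left, norm_smul, Real.norm_of_nonneg ht.le,
      Real.mul_rpow ht.le (norm_nonneg z), Real.rpow_neg ht.le]
    ring
  simp only [hpt, integral_const_mul, hball, smul_eq_mul] at hscale
  rw [nonlocalSymbol, nonlocalSymbol, sub_eq_add_neg, Real.rpow_add ht, Real.rpow_neg ht.le,
    Real.rpow_natCast, mul_assoc, ← hscale, ← mul_assoc, ← Real.rpow_add ht, add_neg_cancel,
    Real.rpow_zero, one_mul]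

lemma nonlocalSymbol_map_linearIsometryEquiv (β r : ℝ) (R : E ≃ₗᵢ[ℝ] E) (K : E) :
    nonlocalSymbol β r (R K) = nonlocalSymbol β r K := by
  have hpre : R ⁻¹' ball (0 : E) r = ball 0 r := by
    ext z
    simp
  have := R.measurePreserving.setIntegral_preimage_emb R.toHomeomorph.measurableEmbedding
    (fun z => (1 - Real.cos ⟪R K, z⟫) / ‖z‖ ^ β) (ball 0 r)
  simp only [hpre, R.inner_map_map, R.norm_map] at this
  exact this.symm

lemma nonlocalSymbol_eq_of_norm_eq (β r : ℝ) {K K' : E} (h : ‖K‖ = ‖K'‖) :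
    nonlocalSymbol β r K = nonlocalSymbol β r K' := by
  rw [← Submodule.reflection_sub h, nonlocalSymbol_map_linearIsometryEquiv]

lemma nonlocalSymbol_pos {β r : ℝ} (hβ : β < Module.finrank ℝ E + 2) (hr : 0 < r) {K : E}
    (hK : K ≠ 0) : 0 < nonlocalSymbol β r K := by
  have : Nontrivial E := nontrivial_of_ne K 0 hK
  have hKpos : 0 < ‖K‖ := norm_pos_iff.mpr hK
  set H : Set E := (LinearMap.ker (innerₛₗ ℝ K) : Set E) with hH
  have hHnull : volume H = 0 :=
    Measure.addHaar_submodule volume _ fun h => hK <| by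
      simpa using (h ▸ Submodule.mem_top : K ∈ LinearMap.ker (innerₛₗ ℝ K))
  set ρ := min r (π / ‖K‖)
  have hρ : 0 < ρ := lt_min hr (by positivity)
  -- on `ball 0 ρ` the phase `⟪K, z⟫` lies in `(-π, π)`, so the cosine equals `1` only on `H`
  have hsupp : ball (0 : E) ρ \ H ⊆
      Function.support (fun z : E => (1 - Real.cos ⟪K, z⟫) / ‖z‖ ^ β) ∩ ball 0 r := by
    rintro z ⟨hzρ, hzH⟩
    have hinner : ⟪K, z⟫ ≠ 0 := by simpa [hH] using hzH
    have hz : z ≠ 0 := by rintro rfl; simp at hinner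
    have hphase : |⟪K, z⟫| < π := calc
      |⟪K, z⟫| ≤ ‖K‖ * ‖z‖ := abs_real_inner_le_norm K z
      _ < ‖K‖ * (π / ‖K‖) := by
        gcongr
        exact (mem_ball_zero_iff.mp hzρ).trans_le (min_le_right _ _)
      _ = π := by field_simp
    have hcos : Real.cos ⟪K, z⟫ ≠ 1 := by
      obtain ⟨hlo, hhi⟩ := abs_lt.mp hphase
      rw [Ne, Real.cos_eq_one_iff_of_lt_of_lt (by linarith [Real.pi_pos])
        (by linarith [Real.pi_pos])]
      exact hinner
    refine ⟨div_ne_zero (sub_ne_zero.mpr hcos.symm) (by positivity), ?_⟩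
    exact ball_subset_ball (min_le_left _ _) hzρ
  rw [nonlocalSymbol, setIntegral_pos_iff_support_of_nonneg_ae
    (ae_of_all _ (one_sub_cos_inner_div_nonneg β K)) (integrableOn_one_sub_cos_inner_div hβ K r)]
  calc 0 < volume (ball (0 : E) ρ) := measure_ball_pos _ _ hρ
    _ = volume (ball (0 : E) ρ \ H) := (measure_sdiff_null hHnull).symm
    _ ≤ _ := measure_mono hsupp

theorem exists_pos_mul_rpow_le_nonlocalSymbol {β δ : ℝ} (hβ : β < Module.finrank ℝ E + 2)
    (hδ : 0 < δ) :
    ∃ C > 0, ∀ K : E, 1 ≤ ‖K‖ →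
      C * ‖K‖ ^ (β - Module.finrank ℝ E) ≤ nonlocalSymbol β δ K := by
  rcases subsingleton_or_nontrivial E with hE | hE
  · exact ⟨1, one_pos, fun K hK => absurd hK (by simp [Subsingleton.elim K 0])⟩
  obtain ⟨e, he⟩ := exists_norm_eq E zero_le_one
  refine ⟨nonlocalSymbol β δ e, nonlocalSymbol_pos hβ hδ (norm_ne_zero_iff.mp (by simp [he])),
    fun K hK => ?_⟩
  have hKpos : 0 < ‖K‖ := one_pos.trans_le hK
  set u := ‖K‖⁻¹ • K
  have hu : ‖u‖ = ‖e‖ := by rw [he, norm_smul, norm_inv, norm_norm, inv_mul_cancel₀ hKpos.ne']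
  calc nonlocalSymbol β δ e * ‖K‖ ^ (β - Module.finrank ℝ E)
      = ‖K‖ ^ (β - Module.finrank ℝ E) * nonlocalSymbol β δ u := by
        rw [nonlocalSymbol_eq_of_norm_eq β δ hu, mul_comm]
    _ ≤ ‖K‖ ^ (β - Module.finrank ℝ E) * nonlocalSymbol β (‖K‖ * δ) u := by
        gcongr
        exact nonlocalSymbol_mono hβ u (le_mul_of_one_le_left hδ.le hK)
    _ = nonlocalSymbol β δ K := by
        rw [← nonlocalSymbol_smul β δ u hKpos, smul_inv_smul₀ hKpos.ne']

lemma one_le_norm_latticeVec {n : ℕ} {k : Fin n → ℤ} (hk : k ≠ 0) : 1 ≤ ‖latticeVec n k‖ := by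
  obtain ⟨i, hi⟩ := Function.ne_iff.mp hk
  calc (1 : ℝ) ≤ |(k i : ℝ)| := by exact_mod_cast Int.one_le_abs hi
    _ = ‖latticeVec n k i‖ := (Real.norm_eq_abs _).symm
    _ ≤ ‖latticeVec n k‖ := PiLp.norm_apply_le _ i

lemma one_add_sq_rpow_le {ρ a : ℝ} (hρ : 1 ≤ ρ) (ha : 0 ≤ a) :
    (1 + ρ ^ 2) ^ a ≤ 2 ^ a * (ρ ^ a) ^ 2 := by
  have hρ0 : 0 ≤ ρ := zero_le_one.trans hρ
  calc (1 + ρ ^ 2) ^ a ≤ (2 * ρ ^ 2) ^ a := by gcongr; nlinarith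
    _ = 2 ^ a * (ρ ^ a) ^ 2 := by
      rw [Real.mul_rpow zero_le_two (by positivity), Real.rpow_pow_comm hρ0]

lemma one_add_sq_rpow_mul_sq_le {ρ a s C x y : ℝ} (hρ : 1 ≤ ρ) (ha : 0 ≤ a) (hC : 0 < C)
    (hx : 0 ≤ x) (hxy : C * ρ ^ a * x ≤ y) :
    (1 + ρ ^ 2) ^ (s + a) * x ^ 2 ≤ 2 ^ a / C ^ 2 * ((1 + ρ ^ 2) ^ s * y ^ 2) := by
  have hw : 0 < 1 + ρ ^ 2 := by positivity
  calc (1 + ρ ^ 2) ^ (s + a) * x ^ 2 = (1 + ρ ^ 2) ^ s * ((1 + ρ ^ 2) ^ a * x ^ 2) := by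
        rw [Real.rpow_add hw]; ring
    _ ≤ (1 + ρ ^ 2) ^ s * (2 ^ a * (ρ ^ a) ^ 2 * x ^ 2) := by
        gcongr; exact one_add_sq_rpow_le hρ ha
    _ = 2 ^ a / C ^ 2 * ((1 + ρ ^ 2) ^ s * (C * ρ ^ a * x) ^ 2) := by
        field_simp
    _ ≤ 2 ^ a / C ^ 2 * ((1 + ρ ^ 2) ^ s * y ^ 2) := by
        gcongr

theorem summable_rpow_mul_sq_of_mul_eq {ι : Type*} {ρ m : ι → ℝ} {f u : ι → ℂ} {s a C : ℝ}
    (ha : 0 ≤ a) (hC : 0 < C) (hm : ∀ i, 1 ≤ ρ i → C * ρ i ^ a ≤ |m i|)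
    (hu : ∀ i, ρ i < 1 → u i = 0) (heq : ∀ i, (m i : ℂ) * u i = f i)
    (hf : Summable fun i => (1 + ρ i ^ 2) ^ s * ‖f i‖ ^ 2) :
    Summable fun i => (1 + ρ i ^ 2) ^ (s + a) * ‖u i‖ ^ 2 := by
  refine (hf.mul_left (2 ^ a / C ^ 2)).of_nonneg_of_le (fun i => by positivity) fun i => ?_
  rcases lt_or_ge (ρ i) 1 with hρ | hρ
  · rw [hu i hρ, norm_zero, zero_pow two_ne_zero, mul_zero]
    positivity
  refine one_add_sq_rpow_mul_sq_le hρ ha hC (norm_nonneg _) ?_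
  calc C * ρ i ^ a * ‖u i‖ ≤ |m i| * ‖u i‖ := by gcongr; exact hm i hρ
    _ = ‖f i‖ := by rw [← heq i, norm_mul, Complex.norm_real, Real.norm_eq_abs]

theorem nonlocal_poisson_regularity_singular_kernel_general (n : ℕ)
    (δ β c s : ℝ) (hδ : 0 < δ) (hβl : (n : ℝ) < β) (hβu : β < n + 2)
    (hc : 0 < c)
    (fhat uhat : (Fin n → ℤ) → ℂ)
    (humean : uhat 0 = 0)
    (hfH : Summable (fun k : Fin n → ℤ =>
      (1 + ‖latticeVec n k‖ ^ 2) ^ s * ‖fhat k‖ ^ 2))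
    (heq : ∀ k : Fin n → ℤ,
      (nonlocalMultiplier n δ β c k : ℂ) * uhat k = fhat k) :
    Summable (fun k : Fin n → ℤ =>
      (1 + ‖latticeVec n k‖ ^ 2) ^ (s + β - n) * ‖uhat k‖ ^ 2) := by
  obtain ⟨C, hC, hsymbol⟩ := exists_pos_mul_rpow_le_nonlocalSymbol
    (E := EuclideanSpace ℝ (Fin n)) (by simpa using hβu) hδ
  have hmult (k : Fin n → ℤ) (hk : 1 ≤ ‖latticeVec n k‖) :
      c * C * ‖latticeVec n k‖ ^ (β - n) ≤ |nonlocalMultiplier n δ β c k| := by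
    rw [nonlocalMultiplier_eq, abs_neg, abs_of_nonneg (mul_nonneg hc.le (nonlocalSymbol_nonneg ..)),
      mul_assoc]
    gcongr
    simpa using hsymbol _ hk
  have hu (k : Fin n → ℤ) (hk : ‖latticeVec n k‖ < 1) : uhat k = 0 := by
    by_cases h : k = 0
    · rw [h, humean]
    · exact absurd hk (one_le_norm_latticeVec h).not_gt
  simpa only [add_sub_assoc] using
    summable_rpow_mul_sq_of_mul_eq (sub_nonneg.mpr hβl.le) (by positivity) hmult hu heq hfH

/-- Periodic nonlocal Poisson equation with singular kernel `n < β < n+2`: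
zero-mean data `f ∈ H^s(Tⁿ)`, `s ≥ 0`, yields a zero-mean solution
`u ∈ H^{s+β−n}(Tⁿ)` — the solution gains `β − n` derivatives. -/
theorem nonlocal_poisson_regularity_singular_kernel (n : ℕ) (hn : 1 ≤ n)
    (δ β c s : ℝ) (hδ : 0 < δ) (hβl : (n : ℝ) < β) (hβu : β < n + 2)
    (hc : 0 < c) (hs : 0 ≤ s)
    (fhat uhat : (Fin n → ℤ) → ℂ)
    (hfmean : fhat 0 = 0) (humean : uhat 0 = 0)
    (hfH : Summable (fun k : Fin n → ℤ =>
      (1 + ‖latticeVec n k‖ ^ 2) ^ s * ‖fhat k‖ ^ 2))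
    (heq : ∀ k : Fin n → ℤ,
      (nonlocalMultiplier n δ β c k : ℂ) * uhat k = fhat k) :
    Summable (fun k : Fin n → ℤ =>
      (1 + ‖latticeVec n k‖ ^ 2) ^ (s + β - n) * ‖uhat k‖ ^ 2) :=
  nonlocal_poisson_regularity_singular_kernel_general n δ β c s hδ hβl hβu hc fhat uhat humean hfH
    heq
end

section
/- Let β < n and suppose u is bounded and measurable with a jump discontinuity across a hypersurface (i.e., u is not continuous at some point x₀ ∈ Ω but has one-sided limits). If f = L^{δ,β}u, then the singular (discontinuous) parts of u and f coincide up to a continuous function: f(x) + c^{δ,β} (∫_{B_δ(0)} ‖z‖^{−β} dz) u(x) is a continuous function of x on Ω. In particular, u and f have jump discontinuities at exactly the same locations, with jump magnitudes proportional by the factor c^{δ,β} ∫_{B_δ(0)} ‖z‖^{−β} dz. -/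
open MeasureTheory Metric Real

open scoped Convolution

/-!
For `β < n` the truncated kernel `K = 1_{B_δ(0)} ‖·‖^{-β}` is integrable, so the integral
defining `f` splits as `f = c (K ⋆ u) - c (∫ K) u`, using that `K` is even. The convolution of an
integrable function with a bounded one is continuous: approximating `K` in `L¹` by continuous
compactly supported functions approximates `K ⋆ u` uniformly by continuous functions.
-/

namespace MeasureTheory

variable {G E E' F : Type*} [NormedAddCommGroup E] [NormedSpace ℝ E]
  [NormedAddCommGroup E'] [NormedSpace ℝ E'] [NormedAddCommGroup F] [NormedSpace ℝ F]
  {L : E →L[ℝ] E' →L[ℝ] F} {K : G → E} {u : G → E'} {C : ℝ}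

theorem norm_convolution_le_of_norm_le [Sub G] [MeasurableSpace G] {μ : Measure G}
    (hK : Integrable K μ) (hC : ∀ x, ‖u x‖ ≤ C) (x : G) :
    ‖(K ⋆[L, μ] u) x‖ ≤ ‖L‖ * (∫ t, ‖K t‖ ∂μ) * C := by
  have hLK : ∀ t, ‖L (K t) (u (x - t))‖ ≤ ‖L‖ * ‖K t‖ * C := fun t =>
    (L.le_opNorm₂ _ _).trans (by gcongr; exact hC _)
  calc ‖(K ⋆[L, μ] u) x‖ ≤ ∫ t, ‖L‖ * ‖K t‖ * C ∂μ :=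
        norm_integral_le_of_norm_le ((hK.norm.const_mul _).mul_const _) (ae_of_all _ hLK)
    _ = ‖L‖ * (∫ t, ‖K t‖ ∂μ) * C := by rw [integral_mul_const, integral_const_mul]

theorem Integrable.convolutionExistsAt_of_norm_le [AddGroup G] [MeasurableSpace G]
    [MeasurableAdd₂ G] [MeasurableNeg G] {μ : Measure G} [SFinite μ] [μ.IsAddRightInvariant]
    (hK : Integrable K μ) (hu : AEStronglyMeasurable u μ) (hC : ∀ x, ‖u x‖ ≤ C) (x : G) :
    ConvolutionExistsAt K u x L μ :=
  ((hK.norm.const_mul ‖L‖).mul_const C).mono'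
    (hK.aestronglyMeasurable.convolution_integrand_snd L hu x)
    (ae_of_all _ fun t => (L.le_opNorm₂ _ _).trans (by gcongr; exact hC _))

theorem Integrable.continuous_convolution_of_norm_le [CompleteSpace F] [AddCommGroup G]
    [TopologicalSpace G] [IsTopologicalAddGroup G] [LocallyCompactSpace G]
    [SecondCountableTopology G] [MeasurableSpace G] [BorelSpace G]
    {μ : Measure G} [μ.IsAddHaarMeasure] (hK : Integrable K μ)
    (hu : AEStronglyMeasurable u μ) (hC : ∀ x, ‖u x‖ ≤ C) :
    Continuous (K ⋆[L, μ] u) := by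
  have hC0 : 0 ≤ C := (norm_nonneg _).trans (hC 0)
  have hu_loc : LocallyIntegrable u μ :=
    (memLp_top_of_bound hu C (ae_of_all _ hC)).locallyIntegrable le_top
  refine continuous_of_uniform_approx_of_continuous fun V hV => ?_
  obtain ⟨ε, hε, hεV⟩ := Metric.mem_uniformity_dist.1 hV
  obtain ⟨g, hg_supp, hg_close, hg_cont, hg_int⟩ :=
    hK.exists_hasCompactSupport_integral_sub_le (ε := ε / (‖L‖ * C + 1)) (by positivity)
  refine ⟨g ⋆[L, μ] u, hg_supp.continuous_convolution_left L hg_cont hu_loc, fun x => hεV ?_⟩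
  have hsplit : (K ⋆[L, μ] u) x = ((K - g) ⋆[L, μ] u) x + (g ⋆[L, μ] u) x := by
    conv_lhs => rw [← sub_add_cancel K g]
    exact ((hK.sub hg_int).convolutionExistsAt_of_norm_le hu hC x).add_distrib
      (hg_int.convolutionExistsAt_of_norm_le hu hC x)
  calc dist ((K ⋆[L, μ] u) x) ((g ⋆[L, μ] u) x) = ‖((K - g) ⋆[L, μ] u) x‖ := by
        rw [hsplit, dist_eq_norm, add_sub_cancel_right]
    _ ≤ ‖L‖ * (ε / (‖L‖ * C + 1)) * C :=
        (norm_convolution_le_of_norm_le (hK.sub hg_int) hC x).trans (by gcongr; exact hg_close)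
    _ < ε := by
        rw [mul_comm ‖L‖, mul_assoc, div_mul_eq_mul_div, div_lt_iff₀ (by positivity)]
        nlinarith [norm_nonneg L]

theorem integral_sub_mul_comp_sub_eq_convolution_sub [AddCommGroup G] [MeasurableSpace G]
    [MeasurableAdd₂ G] [MeasurableNeg G] {μ : Measure G} [SFinite μ] [μ.IsAddLeftInvariant]
    [μ.IsNegInvariant] {K u : G → ℝ} (hK : Integrable K μ) (hK_even : ∀ z, K (-z) = K z)
    (hu : AEStronglyMeasurable u μ) (hC : ∀ x, |u x| ≤ C) (x : G) :
    ∫ y, (u y - u x) * K (y - x) ∂μ =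
      (K ⋆[ContinuousLinearMap.mul ℝ ℝ, μ] u) x - (∫ z, K z ∂μ) * u x := by
  have hKx : Integrable (fun y => K (y - x)) μ := hK.comp_sub_right x
  have hconv : (K ⋆[ContinuousLinearMap.mul ℝ ℝ, μ] u) x = ∫ y, u y * K (y - x) ∂μ := by
    rw [convolution_mul_swap]
    congr 1 with y
    rw [← hK_even, neg_sub, mul_comm]
  simp_rw [sub_mul]
  rw [integral_sub (hKx.bdd_mul hu (ae_of_all _ hC)) (hKx.const_mul _), integral_const_mul,
    integral_sub_right_eq_self, hconv, mul_comm (u x)]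

end MeasureTheory

theorem integrableOn_ball_norm_rpow_neg {E : Type*} [NormedAddCommGroup E] [NormedSpace ℝ E]
    [FiniteDimensional ℝ E] [MeasurableSpace E] [BorelSpace E] (μ : Measure E)
    [μ.IsAddHaarMeasure] (hd : 1 ≤ Module.finrank ℝ E) {β : ℝ} (hβ : β < Module.finrank ℝ E)
    (r : ℝ) : IntegrableOn (fun z : E => ‖z‖ ^ (-β)) (ball 0 r) μ :=
  integrableOn_ball_of_norm_le_rpow hd hβ (C := 1)
    (ae_of_all _ fun z => by simp [abs_of_nonneg (rpow_nonneg (norm_nonneg z) _)])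
    (continuous_norm.measurable.pow_const _).aestronglyMeasurable

theorem setIntegral_ball_sub_div_norm_rpow {E : Type*} [NormedAddCommGroup E] [MeasurableSpace E]
    [OpensMeasurableSpace E] (μ : Measure E) (u : E → ℝ) (x : E) (δ β : ℝ) :
    ∫ y in ball x δ, (u y - u x) / ‖y - x‖ ^ β ∂μ =
      ∫ y, (u y - u x) * (ball 0 δ).indicator (fun z => ‖z‖ ^ (-β)) (y - x) ∂μ := by
  rw [← integral_indicator measurableSet_ball]
  congr 1 with y
  by_cases hy : y ∈ ball x δ
  · have hy' : y - x ∈ ball 0 δ := by rwa [mem_ball_zero_iff, ← dist_eq_norm]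
    rw [Set.indicator_of_mem hy, Set.indicator_of_mem hy', rpow_neg (norm_nonneg _),
      div_eq_mul_inv]
  · have hy' : y - x ∉ ball 0 δ := by rwa [mem_ball_zero_iff, ← dist_eq_norm]
    rw [Set.indicator_of_notMem hy, Set.indicator_of_notMem hy', mul_zero]

theorem jump_correspondence_integrable_kernel_general (n : ℕ) (hn : 1 ≤ n) (δ β c : ℝ)
    (hβ : β < n)
    (Ω : Set (EuclideanSpace ℝ (Fin n)))
    (u f : EuclideanSpace ℝ (Fin n) → ℝ)
    (hum : Measurable u) (hub : ∃ C, ∀ x, |u x| ≤ C)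
    (hf : ∀ x, f x = c * ∫ y in ball x δ, (u y - u x) / ‖y - x‖ ^ β) :
    ContinuousOn (fun x => f x +
      (c * ∫ z in ball (0 : EuclideanSpace ℝ (Fin n)) δ, ‖z‖ ^ (-β)) * u x) Ω := by
  obtain ⟨C, hC⟩ := hub
  set K := (ball (0 : EuclideanSpace ℝ (Fin n)) δ).indicator fun z => ‖z‖ ^ (-β)
  have hK : Integrable K := (integrable_indicator_iff measurableSet_ball).2 <|
    integrableOn_ball_norm_rpow_neg volume (by simpa) (by simpa) δ
  have hK_even : ∀ z, K (-z) = K z := fun z => by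
    simp only [K]
    by_cases hz : z ∈ ball 0 δ
    · rw [Set.indicator_of_mem hz, Set.indicator_of_mem (by simpa using hz), norm_neg]
    · rw [Set.indicator_of_notMem hz, Set.indicator_of_notMem (by simpa using hz)]
  have hconv : Continuous fun x => c * (K ⋆[ContinuousLinearMap.mul ℝ ℝ, volume] u) x :=
    continuous_const.mul (hK.continuous_convolution_of_norm_le hum.aestronglyMeasurable hC)
  refine hconv.continuousOn.congr fun x _ => ?_
  rw [hf x, setIntegral_ball_sub_div_norm_rpow,
    integral_sub_mul_comp_sub_eq_convolution_sub hK hK_even hum.aestronglyMeasurable hC,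
    integral_indicator measurableSet_ball]
  ring

/-- For an integrable kernel (`β < n`) and bounded measurable `u` with a jump
discontinuity at some `x₀ ∈ Ω`, if `f = L^{δ,β} u`, then
`f + c^{δ,β} (∫_{B_δ(0)} ‖z‖^{−β} dz) · u` is continuous on `Ω`: the singular parts
of `u` and `f` coincide up to a continuous function, so `u` and `f` share jump
locations with jump magnitudes proportional by `c^{δ,β} ∫_{B_δ(0)} ‖z‖^{−β} dz`. -/
theorem jump_correspondence_integrable_kernel (n : ℕ) (hn : 1 ≤ n) (δ β c : ℝ)
    (hδ : 0 < δ) (hβ : β < n) (hc : 0 < c)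
    (Ω : Set (EuclideanSpace ℝ (Fin n))) (hΩ : IsOpen Ω)
    (u f : EuclideanSpace ℝ (Fin n) → ℝ)
    (hum : Measurable u) (hub : ∃ C, ∀ x, |u x| ≤ C)
    (x₀ : EuclideanSpace ℝ (Fin n)) (hx₀ : x₀ ∈ Ω) (hjump : ¬ ContinuousAt u x₀)
    (hf : ∀ x, f x = c * ∫ y in ball x δ, (u y - u x) / ‖y - x‖ ^ β) :
    ContinuousOn (fun x => f x +
      (c * ∫ z in ball (0 : EuclideanSpace ℝ (Fin n)) δ, ‖z‖ ^ (-β)) * u x) Ω :=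
  jump_correspondence_integrable_kernel_general n hn δ β c hβ Ω u f hum hub hf
end

section
/- For the periodic nonlocal diffusion equation with integrable kernel (β < n), the solution operator is not smoothing: if u₀ ∈ L²(Tⁿ) \ H^ε(Tⁿ) for some ε > 0, then u(·,t) ∉ H^ε(Tⁿ) for all t ≥ 0. Specifically, because sup_k |m^{δ,β}(k)| = M < ∞, we can write u(·,t) = e^{−At}u₀ + w(·,t) where A = c^{δ,β}∫_{B_δ(0)}‖z‖^{−β}dz and w(·,t) is smoother than u₀ (w(·,t) gains regularity), so u(·,t) has exactly the regularity of u₀. -/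
/-!
Since `β < n`, the kernel `‖z‖^{-β}` is integrable on `B_δ`, and `|cos - 1| ≤ 2` bounds the
multiplier uniformly: `|m^{δ,β}(k)| ≤ M := 2|c|∫_{B_δ}‖z‖^{-β}`. For `t ≥ 0` the solution
multipliers therefore stay above `e^{-Mt} > 0`, so the `H^ε` weighted sum of the solution
dominates `e^{-2Mt}` times that of `u₀`, which diverges.
-/

open MeasureTheory Metric Real
open scoped RealInnerProductSpace

theorem integrableOn_norm_rpow_neg_ball {E : Type*} [NormedAddCommGroup E] [NormedSpace ℝ E]
    [FiniteDimensional ℝ E] [MeasurableSpace E] [BorelSpace E] {μ : Measure E}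
    [μ.IsAddHaarMeasure] (hd : 1 ≤ Module.finrank ℝ E) {β : ℝ}
    (hβ : β < Module.finrank ℝ E) (r : ℝ) :
    IntegrableOn (fun z : E => ‖z‖ ^ (-β)) (ball 0 r) μ :=
  integrableOn_ball_of_norm_le_rpow (C := 1) hd hβ
    (ae_of_all _ fun z => by rw [one_mul, norm_of_nonneg (by positivity)])
    (measurable_norm.pow_const _).aestronglyMeasurable

theorem abs_setIntegral_cos_sub_one_div_rpow_le {E : Type*} [NormedAddCommGroup E]
    [MeasurableSpace E] {μ : Measure E} {s : Set E} {β : ℝ}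
    (hint : IntegrableOn (fun z : E => ‖z‖ ^ (-β)) s μ) (θ : E → ℝ) :
    |∫ z in s, (cos (θ z) - 1) / ‖z‖ ^ β ∂μ| ≤ 2 * ∫ z in s, ‖z‖ ^ (-β) ∂μ := by
  rw [← integral_const_mul, ← Real.norm_eq_abs]
  refine norm_integral_le_of_norm_le (hint.const_mul 2) (ae_of_all _ fun z => ?_)
  have hcos : |cos (θ z) - 1| ≤ 2 := by
    rw [abs_le]; constructor <;> linarith [neg_one_le_cos (θ z), cos_le_one (θ z)]
  rw [norm_eq_abs, abs_div, abs_of_nonneg (rpow_nonneg (norm_nonneg z) β), div_eq_mul_inv,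
    ← rpow_neg (norm_nonneg z)]
  exact mul_le_mul_of_nonneg_right hcos (by positivity)

theorem abs_nonlocalMultiplier_le {n : ℕ} (hn : 1 ≤ n) {β : ℝ} (hβ : β < n) (δ c : ℝ)
    (k : Fin n → ℤ) :
    |nonlocalMultiplier n δ β c k| ≤
      2 * |c| * ∫ z in ball (0 : EuclideanSpace ℝ (Fin n)) δ, ‖z‖ ^ (-β) := by
  have hint := integrableOn_norm_rpow_neg_ball (E := EuclideanSpace ℝ (Fin n)) (μ := volume)
    (β := β) (by rwa [finrank_euclideanSpace_fin]) (by rwa [finrank_euclideanSpace_fin]) δ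
  calc |nonlocalMultiplier n δ β c k|
      ≤ |c| * (2 * ∫ z in ball (0 : EuclideanSpace ℝ (Fin n)) δ, ‖z‖ ^ (-β)) := by
        rw [nonlocalMultiplier, abs_mul]
        gcongr
        exact abs_setIntegral_cos_sub_one_div_rpow_le hint fun z => ⟪latticeVec n k, z⟫
    _ = _ := by ring

theorem summable_of_summable_mul_norm_smul_sq {ι F : Type*} [NormedAddCommGroup F]
    [NormedSpace ℝ F] {w a : ι → ℝ} {f : ι → F} {b : ℝ} (hw : ∀ k, 0 ≤ w k) (hb : 0 < b)
    (hba : ∀ k, b ≤ |a k|) (hS : Summable fun k => w k * ‖a k • f k‖ ^ 2) :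
    Summable fun k => w k * ‖f k‖ ^ 2 := by
  refine .of_nonneg_of_le (fun k => by have := hw k; positivity) (fun k => ?_)
    (hS.mul_left (b ^ 2)⁻¹)
  have hk : b ^ 2 * ‖f k‖ ^ 2 ≤ ‖a k • f k‖ ^ 2 := by
    rw [norm_smul, norm_eq_abs, mul_pow, ← mul_pow, ← mul_pow]
    exact pow_le_pow_left₀ (by positivity)
      (mul_le_mul_of_nonneg_right (hba k) (norm_nonneg _)) 2
  calc w k * ‖f k‖ ^ 2 = (b ^ 2)⁻¹ * (w k * (b ^ 2 * ‖f k‖ ^ 2)) := by field_simp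
    _ ≤ (b ^ 2)⁻¹ * (w k * ‖a k • f k‖ ^ 2) := by gcongr; exact hw k

theorem nonlocal_diffusion_not_smoothing_general (n : ℕ) (hn : 1 ≤ n) (δ β c ε : ℝ)
    (hβ : β < n)
    (u₀hat : (Fin n → ℤ) → ℂ)
    (hnotH : ¬ Summable (fun k : Fin n → ℤ =>
      (1 + ‖latticeVec n k‖ ^ 2) ^ ε * ‖u₀hat k‖ ^ 2)) :
    ∀ t : ℝ, 0 ≤ t →
      ¬ Summable (fun k : Fin n → ℤ =>
        (1 + ‖latticeVec n k‖ ^ 2) ^ ε *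
          ‖Real.exp (nonlocalMultiplier n δ β c k * t) • u₀hat k‖ ^ 2) := by
  intro t ht hS
  set M := 2 * |c| * ∫ z in ball (0 : EuclideanSpace ℝ (Fin n)) δ, ‖z‖ ^ (-β)
  have hlower (k : Fin n → ℤ) : exp (-M * t) ≤ |exp (nonlocalMultiplier n δ β c k * t)| := by
    rw [abs_exp, exp_le_exp]
    exact mul_le_mul_of_nonneg_right (neg_le_of_abs_le (abs_nonlocalMultiplier_le hn hβ δ c k)) ht
  exact hnotH (summable_of_summable_mul_norm_smul_sq (fun k => by positivity) (exp_pos _)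
    hlower hS)

/-- For an integrable kernel (`β < n`), the periodic nonlocal diffusion semigroup
is not smoothing: if `u₀ ∈ L²(Tⁿ) \ H^ε(Tⁿ)` for some `ε > 0`, then the spectral
solution `û(k,t) = e^{m^{δ,β}(k)t} û₀(k)` stays outside `H^ε(Tⁿ)` for every `t ≥ 0`. -/
theorem nonlocal_diffusion_not_smoothing (n : ℕ) (hn : 1 ≤ n) (δ β c ε : ℝ)
    (hδ : 0 < δ) (hβ : β < n) (hc : 0 < c) (hε : 0 < ε)
    (u₀hat : (Fin n → ℤ) → ℂ)
    (hL2 : Summable (fun k : Fin n → ℤ => ‖u₀hat k‖ ^ 2))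
    (hnotH : ¬ Summable (fun k : Fin n → ℤ =>
      (1 + ‖latticeVec n k‖ ^ 2) ^ ε * ‖u₀hat k‖ ^ 2)) :
    ∀ t : ℝ, 0 ≤ t →
      ¬ Summable (fun k : Fin n → ℤ =>
        (1 + ‖latticeVec n k‖ ^ 2) ^ ε *
          ‖Real.exp (nonlocalMultiplier n δ β c k * t) • u₀hat k‖ ^ 2) :=
  nonlocal_diffusion_not_smoothing_general n hn δ β c ε hβ u₀hat hnotH
end
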